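/- arXiv:2503.00579 — 7 statements merged into one kernel-verified Lean document; each statement's English description precedes it below -/
import Mathlib

section
/- Let 0 < r ≤ ∞ and let f : (0,r) → (0,∞) be concave, satisfying 0 < f(x) < x for all x ∈ (0,r) and lim_{x→0⁺} f(x)/x = 1. Then the Abel equation F(f(x)) = F(x) + 1 possesses a convex solution F : (0,r) → ℝ; moreover, if f is strictly increasing then this convex solution can be taken strictly decreasing. -/
open Filter Set Topology
open scoped ENNReal

private lemma concaveH {s : Set ℝ} {f : ℝ → ℝ} (hc : ConcaveOn ℝ s f)
    {a m e : ℝ} (ha : a ∈ s) (he : e ∈ s) (ham : a ≤ m) (hme : m ≤ e) :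
    f a * (e - m) + f e * (m - a) ≤ f m * (e - a) := by
  rcases eq_or_lt_of_le (ham.trans hme) with h | h
  · have h1 : m = a := le_antisymm (h ▸ hme) ham
    subst h1; nlinarith
  · have hea : (0:ℝ) < e - a := by linarith
    have h1 : (0:ℝ) ≤ (e - m) / (e - a) := div_nonneg (by linarith) hea.le
    have h2 : (0:ℝ) ≤ (m - a) / (e - a) := div_nonneg (by linarith) hea.le
    have h3 : (e - m) / (e - a) + (m - a) / (e - a) = 1 := by field_simp; ring
    have h4 := hc.2 ha he h1 h2 h3
    have h5 : ((e - m) / (e - a)) • a + ((m - a) / (e - a)) • e = m := by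
      simp only [smul_eq_mul]; field_simp; ring
    rw [h5, smul_eq_mul, smul_eq_mul] at h4
    have h7 := mul_le_mul_of_nonneg_right h4 hea.le
    calc f a * (e - m) + f e * (m - a)
        = ((e - m)/(e-a) * f a + (m - a)/(e-a) * f e) * (e - a) := by field_simp
      _ ≤ f m * (e - a) := h7

private lemma concaveC2 {s : Set ℝ} {f : ℝ → ℝ} (hc : ConcaveOn ℝ s f)
    {a c e : ℝ} (ha : a ∈ s) (he : e ∈ s) (hac : a ≤ c) (hce : c ≤ e) :
    (f e - f c) * (e - a) ≤ (f e - f a) * (e - c) := by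
  have := concaveH hc ha he hac hce; nlinarith

private lemma concaveC3 {s : Set ℝ} {f : ℝ → ℝ} (hc : ConcaveOn ℝ s f)
    {a b e : ℝ} (ha : a ∈ s) (he : e ∈ s) (hab : a ≤ b) (hbe : b ≤ e) :
    (f e - f a) * (b - a) ≤ (f b - f a) * (e - a) := by
  have := concaveH hc ha he hab hbe; nlinarith

private lemma concaveC1 {s : Set ℝ} {f : ℝ → ℝ} (hc : ConcaveOn ℝ s f)
    {a b e : ℝ} (ha : a ∈ s) (he : e ∈ s) (hab : a < b) (hbe : b ≤ e) :
    (f e - f b) * (b - a) ≤ (f b - f a) * (e - b) := by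
  have h2 := concaveC2 hc ha he hab.le hbe
  have h3 := concaveC3 hc ha he hab.le hbe
  have hea : (0:ℝ) < e - a := by linarith
  have hba : (0:ℝ) ≤ b - a := by linarith
  have heb : (0:ℝ) ≤ e - b := by linarith
  nlinarith [mul_le_mul_of_nonneg_right h2 hba, mul_le_mul_of_nonneg_right h3 heb]

private lemma abel_aux (D' : Set ℝ) (e0 : ℝ) (he0 : e0 ∈ D')
    (hpos : ∀ x ∈ D', 0 < x)
    (hdc : ∀ x ∈ D', ∀ y : ℝ, 0 < y → y ≤ x → y ∈ D')
    (f : ℝ → ℝ)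
    (hconc : ConcaveOn ℝ D' f)
    (hmono : MonotoneOn f D')
    (hf : ∀ x ∈ D', 0 < f x ∧ f x < x)
    (hlim : Filter.Tendsto (fun x => f x / x) (nhdsWithin 0 (Set.Ioi 0)) (nhds 1)) :
    ∃ F : ℝ → ℝ, ConvexOn ℝ D' F ∧ AntitoneOn F D' ∧ ∀ x ∈ D', F (f x) = F x + 1 := by
  have hmaps : ∀ x ∈ D', f x ∈ D' := fun x hx => hdc x hx (f x) (hf x hx).1 (hf x hx).2.le
  have hconvD' : Convex ℝ D' := by
    intro x hx y hy a b ha hb hab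
    simp only [smul_eq_mul]
    rcases le_total x y with h | h
    · refine hdc y hy _ (by nlinarith [hpos x hx, hpos y hy]) ?_
      have h1 : a * x ≤ a * y := mul_le_mul_of_nonneg_left h ha
      have h2 : a * y + b * y = y := by rw [← add_mul, hab, one_mul]
      linarith
    · refine hdc x hx _ (by nlinarith [hpos x hx, hpos y hy]) ?_
      have h1 : b * y ≤ b * x := mul_le_mul_of_nonneg_left h hb
      have h2 : a * x + b * x = x := by rw [← add_mul, hab, one_mul]
      linarith
  -- f tends to 0 at 0+
  have hf0 : Tendsto f (nhdsWithin 0 (Set.Ioi 0)) (nhds 0) := by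
    have h1 : Tendsto (fun x : ℝ => (f x / x) * x) (nhdsWithin 0 (Set.Ioi 0)) (nhds 0) := by
      have h2 : Tendsto (fun x : ℝ => x) (nhdsWithin 0 (Set.Ioi 0)) (nhds 0) :=
        tendsto_id.mono_left nhdsWithin_le_nhds
      simpa using hlim.mul h2
    refine h1.congr' ?_
    filter_upwards [self_mem_nhdsWithin] with w hw
    exact div_mul_cancel₀ _ (ne_of_gt hw)
  -- chord slopes are bounded by f u / u
  have hkey : ∀ u ∈ D', ∀ v ∈ D', u < v → (f v - f u) / (v - u) ≤ f u / u := by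
    intro u hu v hv huv
    have hupos := hpos u hu
    have hT : Tendsto (fun w => (f u - f w) / (u - w)) (nhdsWithin 0 (Set.Ioi 0))
        (nhds (f u / u)) := by
      have h1 : Tendsto (fun w : ℝ => f u - f w) (nhdsWithin 0 (Set.Ioi 0))
          (nhds (f u - 0)) := tendsto_const_nhds.sub hf0
      have h2 : Tendsto (fun w : ℝ => u - w) (nhdsWithin 0 (Set.Ioi 0)) (nhds (u - 0)) :=
        tendsto_const_nhds.sub (tendsto_id.mono_left nhdsWithin_le_nhds)
      simpa [Pi.div_def] using h1.div h2 (by simpa using hupos.ne')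
    refine ge_of_tendsto hT ?_
    have hmin : (0:ℝ) < min u e0 := lt_min hupos (hpos e0 he0)
    have hev : Set.Ioo (0:ℝ) (min u e0) ∈ nhdsWithin (0:ℝ) (Set.Ioi 0) :=
      Ioo_mem_nhdsGT_of_mem ⟨le_refl 0, hmin⟩
    filter_upwards [hev] with w hw
    have hwD : w ∈ D' := hdc e0 he0 w hw.1 (le_of_lt (lt_of_lt_of_le hw.2 (min_le_right _ _)))
    have hwu : w < u := lt_of_lt_of_le hw.2 (min_le_left _ _)
    have hC := concaveC1 hconc hwD hv hwu huv.le
    rw [div_le_div_iff₀ (by linarith) (by linarith)]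
    nlinarith [hC]
  have hslope1 : ∀ u ∈ D', ∀ v ∈ D', u ≤ v → f v - f u ≤ v - u := by
    intro u hu v hv huv
    rcases eq_or_lt_of_le huv with rfl | h
    · simp
    have h1 := hkey u hu v hv h
    have h2 : f u / u ≤ 1 := (div_le_one (hpos u hu)).2 (hf u hu).2.le
    have h3 : (f v - f u) / (v - u) ≤ 1 := h1.trans h2
    have h4 := (div_le_one (by linarith : (0:ℝ) < v - u)).1 h3
    linarith
  -- iterates stay in D', are monotone and concave
  have hiterD : ∀ n, ∀ x ∈ D', f^[n] x ∈ D' := by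
    intro n
    induction n with
    | zero => intro x hx; simpa using hx
    | succ n ih =>
      intro x hx
      rw [Function.iterate_succ_apply']
      exact hmaps _ (ih x hx)
  have hitermono : ∀ n, ∀ x ∈ D', ∀ y ∈ D', x ≤ y → f^[n] x ≤ f^[n] y := by
    intro n
    induction n with
    | zero => intro x _ y _ h; simpa using h
    | succ n ih =>
      intro x hx y hy h
      rw [Function.iterate_succ_apply', Function.iterate_succ_apply']
      exact hmono (hiterD n x hx) (hiterD n y hy) (ih x hx y hy h)
  have hiterconc : ∀ n, ConcaveOn ℝ D' (f^[n]) := by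
    intro n
    induction n with
    | zero => exact ⟨hconvD', by intro x hx y hy a b ha hb hab; simp⟩
    | succ n ih =>
      refine ⟨hconvD', ?_⟩
      intro x hx y hy a b ha hb hab
      have hcomb : a • x + b • y ∈ D' := hconvD' hx hy ha hb hab
      have h1 : a • f^[n] x + b • f^[n] y ≤ f^[n] (a • x + b • y) := ih.2 hx hy ha hb hab
      have hmem1 : a • f^[n] x + b • f^[n] y ∈ D' :=
        hconvD' (hiterD n x hx) (hiterD n y hy) ha hb hab
      rw [Function.iterate_succ_apply', Function.iterate_succ_apply',
        Function.iterate_succ_apply']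
      calc a • f (f^[n] x) + b • f (f^[n] y)
          ≤ f (a • f^[n] x + b • f^[n] y) :=
            hconc.2 (hiterD n x hx) (hiterD n y hy) ha hb hab
        _ ≤ f (f^[n] (a • x + b • y)) := hmono hmem1 (hiterD n _ hcomb) h1
  -- the base orbit X n = f^[n] e0 and its gaps
  set X : ℕ → ℝ := fun n => f^[n] e0 with hXdef
  have hXD : ∀ n, X n ∈ D' := fun n => hiterD n e0 he0
  have hXsucc : ∀ n, X (n + 1) = f (X n) := fun n => Function.iterate_succ_apply' f n e0
  have hXdec : ∀ n, X (n + 1) < X n := fun n => by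
    rw [hXsucc]; exact (hf _ (hXD n)).2
  have hXpos : ∀ n, 0 < X n := fun n => hpos _ (hXD n)
  have hXanti : StrictAnti X := strictAnti_nat_of_succ_lt hXdec
  set d : ℕ → ℝ := fun n => X n - X (n + 1) with hddef
  have hdpos : ∀ n, 0 < d n := fun n => sub_pos.2 (hXdec n)
  have hdsucc : ∀ n, d (n + 1) ≤ d n := by
    intro n
    have h1 := hslope1 (X (n + 1)) (hXD (n + 1)) (X n) (hXD n) (hXdec n).le
    have h2 : d (n + 1) = f (X n) - f (X (n + 1)) := by
      simp only [hddef]; rw [hXsucc (n + 1), hXsucc n]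
    simp only [hddef] at *
    linarith
  have hdanti : ∀ n m, n ≤ m → d m ≤ d n := fun n m h =>
    antitone_nat_of_succ_le hdsucc h
  -- X tends to 0
  have hXbdd : BddBelow (Set.range X) := ⟨0, by rintro _ ⟨n, rfl⟩; exact (hXpos n).le⟩
  have hXtendL : Tendsto X atTop (nhds (⨅ n, X n)) := tendsto_atTop_ciInf hXanti.antitone hXbdd
  have hLle : ∀ n, (⨅ n, X n) ≤ X n := fun n => ciInf_le hXbdd n
  have hL0 : 0 ≤ ⨅ n, X n := le_ciInf fun n => (hXpos n).le
  have hLzero : (⨅ n, X n) = 0 := by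
    by_contra h
    have hLpos : 0 < ⨅ n, X n := lt_of_le_of_ne hL0 (Ne.symm h)
    have hLD : (⨅ n, X n) ∈ D' := hdc (X 0) (hXD 0) _ hLpos (hLle 0)
    have hgap : ∀ n, (⨅ n, X n) - f (⨅ n, X n) ≤ d n := by
      intro n
      have h1 := hslope1 _ hLD (X n) (hXD n) (hLle n)
      have h2 : d n = X n - f (X n) := by simp only [hddef]; rw [hXsucc n]
      linarith
    have hd0 : Tendsto d atTop (nhds 0) := by
      have h2 : Tendsto (fun n => X (n + 1)) atTop (nhds (⨅ n, X n)) :=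
        hXtendL.comp (tendsto_add_atTop_nat 1)
      have h3 := hXtendL.sub h2
      simpa using h3
    have hfL := (hf _ hLD).2
    obtain ⟨n, hn⟩ := (hd0.eventually
      (eventually_lt_nhds (show (0:ℝ) < (⨅ n, X n) - f (⨅ n, X n) by linarith))).exists
    linarith [hgap n]
  have hX0 : Tendsto X atTop (nhds 0) := hLzero ▸ hXtendL
  -- ratio of successive gaps tends to 1
  have hσle : ∀ n, d (n + 1) / d n ≤ 1 := fun n => (div_le_one (hdpos n)).2 (hdsucc n)
  have hσ : Tendsto (fun n => d (n + 1) / d n) atTop (nhds 1) := by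
    refine tendsto_order.2 ⟨?_, ?_⟩
    · intro l hl
      have hl2 : l < (l + 1) / 2 := by linarith
      have hl3 : (l + 1) / 2 < 1 := by linarith
      have hev1 : ∀ᶠ w in nhdsWithin (0:ℝ) (Set.Ioi 0), (l + 1) / 2 < f w / w :=
        hlim.eventually (eventually_gt_nhds hl3)
      have hev2 : Set.Ioo (0:ℝ) e0 ∈ nhdsWithin (0:ℝ) (Set.Ioi 0) :=
        Ioo_mem_nhdsGT_of_mem ⟨le_refl 0, hpos e0 he0⟩
      obtain ⟨c, hc1, hc2⟩ := (hev1.and (eventually_of_mem hev2 (fun w hw => hw))).exists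
      have hcD : c ∈ D' := hdc e0 he0 c hc2.1 hc2.2.le
      have hcpos : (0:ℝ) < c := hc2.1
      have hTs : Tendsto (fun n => (f c - X (n + 1)) / (c - X n)) atTop (nhds (f c / c)) := by
        have h1 : Tendsto (fun n => f c - X (n + 1)) atTop (nhds (f c - 0)) :=
          tendsto_const_nhds.sub (hX0.comp (tendsto_add_atTop_nat 1))
        have h2 : Tendsto (fun n => c - X n) atTop (nhds (c - 0)) := tendsto_const_nhds.sub hX0
        simpa [Pi.div_def] using h1.div h2 (by simpa using hcpos.ne')
      have hlfc : l < f c / c := lt_trans hl2 hc1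
      have hev3 : ∀ᶠ n in atTop, l < (f c - X (n + 1)) / (c - X n) :=
        hTs.eventually (eventually_gt_nhds hlfc)
      have hev4 : ∀ᶠ n in atTop, X n < c := hX0.eventually (eventually_lt_nhds hcpos)
      filter_upwards [hev3, hev4] with n h3 h4
      have hC := concaveC1 hconc (hXD (n + 1)) hcD (hXdec n) h4.le
      rw [← hXsucc n, ← hXsucc (n + 1)] at hC
      have h5 : (f c - X (n + 1)) / (c - X n) ≤ d (n + 1) / d n := by
        rw [div_le_div_iff₀ (by linarith) (hdpos n)]
        have hdn : d n = X n - X (n + 1) := rfl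
        have hdn1 : d (n + 1) = X (n + 1) - X (n + 2) := rfl
        rw [hdn, hdn1]
        nlinarith [hC]
      exact lt_of_lt_of_le h3 h5
    · intro u hu
      exact Filter.Eventually.of_forall fun n => lt_of_le_of_lt (hσle n) hu
  -- the approximating sequence
  set A : ℕ → ℝ → ℝ := fun n z => (X n - f^[n] z) / d n with hAdef
  have hfz1 : ∀ (n : ℕ) (z : ℝ), f^[n + 1] z = f (f^[n] z) := fun n z =>
    Function.iterate_succ_apply' f n z
  have hconvA : ∀ z ∈ D', ∃ l, Tendsto (fun n => A n z) atTop (nhds l) := by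
    intro z hz
    have hyD : ∀ n, f^[n] z ∈ D' := fun n => hiterD n z hz
    rcases le_or_gt e0 z with hze | hze
    · -- z ≥ e0 : nondecreasing, bounded above by 0
      have hyge : ∀ n, X n ≤ f^[n] z := fun n => hitermono n e0 he0 z hz hze
      have hstep : ∀ n, A n z ≤ A (n + 1) z := by
        intro n
        have hC := concaveC1 hconc (hXD (n + 1)) (hyD n) (hXdec n) (hyge n)
        rw [← hXsucc n, ← hXsucc (n + 1), ← hfz1 n z] at hC
        simp only [hAdef]
        rw [div_le_div_iff₀ (hdpos n) (hdpos (n + 1))]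
        have hdn : d n = X n - X (n + 1) := rfl
        have hdn1 : d (n + 1) = X (n + 1) - X (n + 2) := rfl
        rw [hdn, hdn1]
        nlinarith [hC]
      have hmonoA : Monotone fun n => A n z := monotone_nat_of_le_succ hstep
      have hbddA : BddAbove (Set.range fun n => A n z) := by
        refine ⟨0, ?_⟩
        rintro _ ⟨n, rfl⟩
        exact div_nonpos_of_nonpos_of_nonneg (by linarith [hyge n]) (hdpos n).le
      exact ⟨_, tendsto_atTop_ciSup hmonoA hbddA⟩
    · rcases le_or_gt (X 1) z with hz1 | hz1
      · -- X 1 ≤ z ≤ e0: nonincreasing, bounded below by 0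
        have hyle : ∀ n, f^[n] z ≤ X n := fun n => hitermono n z hz e0 he0 hze.le
        have hyge : ∀ n, X (n + 1) ≤ f^[n] z := by
          intro n
          have h2 : f^[n] (X 1) = X (n + 1) := by
            show f^[n] (f^[1] e0) = f^[n + 1] e0
            exact (Function.iterate_add_apply f n 1 e0).symm
          calc X (n + 1) = f^[n] (X 1) := h2.symm
            _ ≤ f^[n] z := hitermono n (X 1) (hXD 1) z hz hz1
        have hstep : ∀ n, A (n + 1) z ≤ A n z := by
          intro n
          have hC := concaveC2 hconc (hXD (n + 1)) (hXD n) (hyge n) (hyle n)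
          rw [← hXsucc n, ← hXsucc (n + 1), ← hfz1 n z] at hC
          simp only [hAdef]
          rw [div_le_div_iff₀ (hdpos (n + 1)) (hdpos n)]
          have hdn : d n = X n - X (n + 1) := rfl
          have hdn1 : d (n + 1) = X (n + 1) - X (n + 2) := rfl
          rw [hdn, hdn1]
          nlinarith [hC]
        have hantiA : Antitone fun n => A n z := antitone_nat_of_succ_le hstep
        have hbddA : BddBelow (Set.range fun n => A n z) :=
          ⟨0, by rintro _ ⟨n, rfl⟩; exact div_nonneg (by linarith [hyle n]) (hdpos n).le⟩
        exact ⟨_, tendsto_atTop_ciInf hantiA hbddA⟩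
      · -- z < X 1 : nondecreasing, bounded above
        obtain ⟨m, hm⟩ := (hX0.eventually (eventually_lt_nhds (hpos z hz))).exists
        have hm2 : 2 ≤ m := by
          by_contra hc
          push_neg at hc
          have h1 : X 1 ≤ X m := hXanti.antitone (by omega)
          linarith
        obtain ⟨k, rfl⟩ : ∃ k, m = k + 1 := ⟨m - 1, by omega⟩
        have hiterX : ∀ n j, f^[n] (X j) = X (n + j) := by
          intro n j
          show f^[n] (f^[j] e0) = f^[n + j] e0
          exact (Function.iterate_add_apply f n j e0).symm
        have hyge : ∀ n, X (n + (k + 1)) ≤ f^[n] z := by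
          intro n
          calc X (n + (k + 1)) = f^[n] (X (k + 1)) := (hiterX n (k + 1)).symm
            _ ≤ f^[n] z := hitermono n (X (k + 1)) (hXD (k + 1)) z hz hm.le
        have hyle : ∀ n, f^[n] z ≤ X (n + 1) := by
          intro n
          calc f^[n] z ≤ f^[n] (X 1) := hitermono n z hz (X 1) (hXD 1) hz1.le
            _ = X (n + 1) := hiterX n 1
        have hstep : ∀ n, A n z ≤ A (n + 1) z := by
          intro n
          have hC := concaveC2 hconc (hyD n) (hXD n)
            ((hyle n).trans (le_refl _)) (hXdec n).le
          rw [← hXsucc n, ← hXsucc (n + 1), ← hfz1 n z] at hC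
          simp only [hAdef]
          rw [div_le_div_iff₀ (hdpos n) (hdpos (n + 1))]
          have hdn : d n = X n - X (n + 1) := rfl
          have hdn1 : d (n + 1) = X (n + 1) - X (n + 2) := rfl
          rw [hdn, hdn1]
          nlinarith [hC]
        have hgap : ∀ n (j : ℕ), X n - X (n + j) ≤ (j : ℝ) * d n := by
          intro n j
          induction j with
          | zero => simp
          | succ j ih =>
            have h1 : d (n + j) ≤ d n := hdanti n (n + j) (by omega)
            have h2 : X (n + j) - X (n + j + 1) = d (n + j) := rfl
            have h3 : n + (j + 1) = n + j + 1 := by omega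
            rw [h3]
            push_cast
            nlinarith [ih, h1]
        have hbddA : BddAbove (Set.range fun n => A n z) := by
          refine ⟨(k : ℝ) + 1, ?_⟩
          rintro _ ⟨n, rfl⟩
          have h3 := hgap n (k + 1)
          have h4 := hyge n
          have h2 : X n - f^[n] z ≤ ((k : ℝ) + 1) * d n := by
            push_cast at h3
            linarith
          show (X n - f^[n] z) / d n ≤ (k : ℝ) + 1
          rw [div_le_iff₀ (hdpos n)]
          linarith
        have hmonoA : Monotone fun n => A n z := monotone_nat_of_le_succ hstep
        exact ⟨_, tendsto_atTop_ciSup hmonoA hbddA⟩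
  -- the limit function
  set Ft : ℝ → ℝ := fun z => limUnder atTop (fun n => A n z) with hFtdef
  have htendF : ∀ z ∈ D', Tendsto (fun n => A n z) atTop (nhds (Ft z)) := by
    intro z hz
    obtain ⟨l, hl⟩ := hconvA z hz
    have h1 : Ft z = l := hl.limUnder_eq
    rw [h1]; exact hl
  refine ⟨Ft, ⟨hconvD', ?_⟩, ?_, ?_⟩
  · -- convexity
    intro x hx y hy a b ha hb hab
    have hcomb : a • x + b • y ∈ D' := hconvD' hx hy ha hb hab
    have hT2 : Tendsto (fun n => a * A n x + b * A n y) atTop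
        (nhds (a * Ft x + b * Ft y)) :=
      ((htendF x hx).const_mul a).add ((htendF y hy).const_mul b)
    have hpt : ∀ n, A n (a • x + b • y) ≤ a * A n x + b * A n y := by
      intro n
      have hxy : a • x + b • y = a * x + b * y := by simp [smul_eq_mul]
      have h1 : a • f^[n] x + b • f^[n] y ≤ f^[n] (a • x + b • y) :=
        (hiterconc n).2 hx hy ha hb hab
      rw [hxy] at h1
      simp only [smul_eq_mul] at h1
      have h3 : a * X n + b * X n = X n := by rw [← add_mul, hab, one_mul]
      have h2 : X n - f^[n] (a * x + b * y) ≤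
          a * (X n - f^[n] x) + b * (X n - f^[n] y) := by linarith
      rw [hxy]
      calc A n (a * x + b * y) = (X n - f^[n] (a * x + b * y)) / d n := rfl
        _ ≤ (a * (X n - f^[n] x) + b * (X n - f^[n] y)) / d n :=
            div_le_div_of_nonneg_right h2 (hdpos n).le
        _ = a * A n x + b * A n y := by
            simp only [hAdef]
            field_simp
    have h := le_of_tendsto_of_tendsto' (htendF _ hcomb) hT2 hpt
    simpa [smul_eq_mul] using h
  · -- antitone
    intro z hz w hw hzw
    refine le_of_tendsto_of_tendsto' (htendF w hw) (htendF z hz) fun n => ?_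
    have h1 : f^[n] z ≤ f^[n] w := hitermono n z hz w hw hzw
    show (X n - f^[n] w) / d n ≤ (X n - f^[n] z) / d n
    exact div_le_div_of_nonneg_right (by linarith) (hdpos n).le
  · -- Abel equation
    intro z hz
    have hfzD := hmaps z hz
    have h1 : ∀ n, A n (f z) = 1 + A (n + 1) z * (d (n + 1) / d n) := by
      intro n
      have hval : f^[n] (f z) = f^[n + 1] z := (Function.iterate_succ_apply f n z).symm
      have hd1 : X n - X (n + 1) ≠ 0 := sub_ne_zero.2 (hXdec n).ne'
      have hd2 : X (n + 1) - X (n + 2) ≠ 0 := sub_ne_zero.2 (hXdec (n + 1)).ne'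
      simp only [hAdef]
      rw [hval, show d n = X n - X (n + 1) from rfl,
        show d (n + 1) = X (n + 1) - X (n + 2) from rfl]
      field_simp
      ring
    have hT2 : Tendsto (fun n => 1 + A (n + 1) z * (d (n + 1) / d n)) atTop
        (nhds (1 + Ft z * 1)) :=
      tendsto_const_nhds.add (((htendF z hz).comp (tendsto_add_atTop_nat 1)).mul hσ)
    have h2 := tendsto_nhds_unique (Filter.Tendsto.congr h1 (htendF _ hfzD)) hT2
    linarith


/-- Existence of a convex solution of the Abel equation `F (f x) = F x + 1` on the
interval `(0, r)` (where `0 < r ≤ ∞`, modeled by `r : ℝ≥0∞` with `0 < r`),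
for a concave `f` with `0 < f x < x` and `f x / x → 1` as `x → 0⁺`.
Moreover the convex solution can be taken strictly decreasing whenever `f` is
strictly increasing. -/
theorem abel_convex_solution_exists
    (r : ℝ≥0∞) (hr : 0 < r)
    (D : Set ℝ) (hD : D = {x : ℝ | 0 < x ∧ ENNReal.ofReal x < r})
    (f : ℝ → ℝ)
    (hconc : ConcaveOn ℝ D f)
    (hf : ∀ x ∈ D, 0 < f x ∧ f x < x)
    (hlim : Filter.Tendsto (fun x => f x / x) (nhdsWithin 0 (Set.Ioi 0)) (nhds 1)) :
    ∃ F : ℝ → ℝ, ConvexOn ℝ D F ∧ (∀ x ∈ D, F (f x) = F x + 1) ∧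
      (StrictMonoOn f D → StrictAntiOn F D) := by
  subst hD
  set D : Set ℝ := {x : ℝ | 0 < x ∧ ENNReal.ofReal x < r} with hDdef
  have hDpos : ∀ x ∈ D, 0 < x := fun x hx => hx.1
  have hDdc : ∀ x ∈ D, ∀ y : ℝ, 0 < y → y ≤ x → y ∈ D := by
    intro x hx y hy hyx
    exact ⟨hy, lt_of_le_of_lt (ENNReal.ofReal_le_ofReal hyx) hx.2⟩
  have hDne : ∃ e, e ∈ D := by
    by_cases hrt : r = ⊤
    · exact ⟨1, one_pos, by rw [hrt]; exact ENNReal.ofReal_lt_top⟩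
    · have htr : 0 < r.toReal := ENNReal.toReal_pos hr.ne' hrt
      refine ⟨r.toReal / 2, by linarith, ?_⟩
      have h1 : ENNReal.ofReal (r.toReal / 2) < ENNReal.ofReal r.toReal :=
        (ENNReal.ofReal_lt_ofReal_iff htr).2 (by linarith)
      rwa [ENNReal.ofReal_toReal hrt] at h1
  obtain ⟨e0, he0⟩ := hDne
  have hconvD : Convex ℝ D := by
    intro x hx y hy a b ha hb hab
    simp only [smul_eq_mul]
    rcases le_total x y with h | h
    · refine hDdc y hy _ (by nlinarith [hDpos x hx, hDpos y hy]) ?_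
      have h1 : a * x ≤ a * y := mul_le_mul_of_nonneg_left h ha
      have h2 : a * y + b * y = y := by rw [← add_mul, hab, one_mul]
      linarith
    · refine hDdc x hx _ (by nlinarith [hDpos x hx, hDpos y hy]) ?_
      have h1 : b * y ≤ b * x := mul_le_mul_of_nonneg_left h hb
      have h2 : a * x + b * x = x := by rw [← add_mul, hab, one_mul]
      linarith
  have hmapsD : ∀ x ∈ D, f x ∈ D := fun x hx => hDdc x hx _ (hf x hx).1 (hf x hx).2.le
  obtain ⟨D', hsub, hconvD', hmapsto, Ft, hFc, hFa, hFab⟩ :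
      ∃ D', D' ⊆ D ∧ Convex ℝ D' ∧ (∀ x ∈ D, f x ∈ D') ∧
        ∃ Ft : ℝ → ℝ, ConvexOn ℝ D' Ft ∧ AntitoneOn Ft D' ∧ (∀ x ∈ D', Ft (f x) = Ft x + 1) := by
    by_cases hm : MonotoneOn f D
    · exact ⟨D, subset_rfl, hconvD, hmapsD,
        abel_aux D e0 he0 hDpos hDdc f hconc hm hf hlim⟩
    · rw [MonotoneOn] at hm; push_neg at hm
      obtain ⟨u, hu, v, hv, huv, hfvu⟩ := hm
      have huv' : u < v := huv.lt_of_ne (fun h => by subst h; exact lt_irrefl _ hfvu)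
      have hDopen : IsOpen D := by
        have hset : D = Set.Ioi 0 ∩ ENNReal.ofReal ⁻¹' Set.Iio r := by
          ext x; simp [Set.mem_Ioi, Set.mem_Iio, hDdef]
        rw [hset]
        exact isOpen_Ioi.inter (ENNReal.continuous_ofReal.isOpen_preimage _ isOpen_Iio)
      have hcont : ContinuousOn f D := hconc.continuousOn hDopen
      have hεpos : 0 < f v := (hf v hv).1
      have hεltv : f v < v := (hf v hv).2
      have hKsub : Set.Icc (f v) v ⊆ D := fun w hw =>
        hDdc v hv w (lt_of_lt_of_le hεpos hw.1) hw.2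
      obtain ⟨q, hqK, hqmax⟩ := isCompact_Icc.exists_isMaxOn (Set.nonempty_Icc.2 hεltv.le)
        (hcont.mono hKsub)
      have hqD : q ∈ D := hKsub hqK
      have hfqq : f q < q := (hf q hqD).2
      have hmax : ∀ w ∈ Set.Icc (f v) v, f w ≤ f q := fun w hw => hqmax hw
      have hεq : f v ≤ q := hqK.1
      have hfvq : f v ≤ f q := hmax v (Set.right_mem_Icc.2 hεltv.le)
      have hdecr : ∀ w ∈ D, v < w → f w < f v := by
        intro w hw hvw
        have hC := concaveC1 hconc hu hw huv' hvw.le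
        nlinarith [hC]
      have himg : ∀ w ∈ D, f w < q := by
        intro w hw
        rcases le_total w (f v) with h | h
        · exact lt_of_lt_of_le (lt_of_lt_of_le (hf w hw).2 h) hεq
        · rcases le_total w v with h2 | h2
          · exact lt_of_le_of_lt (hmax w ⟨h, h2⟩) hfqq
          · rcases eq_or_lt_of_le h2 with rfl | h3
            · exact lt_of_le_of_lt hfvq hfqq
            · exact (hdecr w hw h3).trans (lt_of_le_of_lt hfvq hfqq)
      set D'' : Set ℝ := {x : ℝ | 0 < x ∧ x < q} with hD''
      have hD''sub : D'' ⊆ D := fun w hw => hDdc q hqD w hw.1 hw.2.le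
      have hmono'' : MonotoneOn f D'' := by
        intro s hs t ht hst
        by_contra hts
        push_neg at hts
        have hsD := hD''sub hs
        have htD := hD''sub ht
        have hst' : s < t := hst.lt_of_ne (fun h => by subst h; exact lt_irrefl _ hts)
        have htq : t < q := ht.2
        have hfqft : f q < f t := by
          have hC := concaveC1 hconc hsD hqD hst' htq.le
          nlinarith [hC]
        rcases le_total (f v) t with h | h
        · have h1 : f t ≤ f q := hmax t ⟨h, htq.le.trans hqK.2⟩
          linarith
        · have h1 : f t < t := (hf t htD).2
          linarith
      have hfqpos : 0 < f q := (hf q hqD).1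
      have he0'' : f q ∈ D'' := ⟨hfqpos, hfqq⟩
      have hpos'' : ∀ x ∈ D'', 0 < x := fun x hx => hx.1
      have hdc'' : ∀ x ∈ D'', ∀ y : ℝ, 0 < y → y ≤ x → y ∈ D'' :=
        fun x hx y hy hyx => ⟨hy, lt_of_le_of_lt hyx hx.2⟩
      have hconv'' : Convex ℝ D'' := by
        have hset : D'' = Set.Ioo 0 q := by ext w; simp [hD'', Set.mem_Ioo]
        rw [hset]; exact convex_Ioo 0 q
      have hconc'' : ConcaveOn ℝ D'' f := hconc.subset hD''sub hconv''
      have hf'' : ∀ x ∈ D'', 0 < f x ∧ f x < x := fun x hx => hf x (hD''sub hx)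
      exact ⟨D'', hD''sub, hconv'', fun x hx => ⟨(hf x hx).1, himg x hx⟩,
        abel_aux D'' (f q) he0'' hpos'' hdc'' f hconc'' hmono'' hf'' hlim⟩
  set F : ℝ → ℝ := fun z => Ft (f z) - 1 with hFdef
  have hFconv : ConvexOn ℝ D F := by
    refine ⟨hconvD, ?_⟩
    intro x hx y hy a b ha hb hab
    have hcomb : a • x + b • y ∈ D := hconvD hx hy ha hb hab
    have h1 : a • f x + b • f y ≤ f (a • x + b • y) := hconc.2 hx hy ha hb hab
    have hfx := hmapsto x hx
    have hfy := hmapsto y hy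
    have hmem1 : a • f x + b • f y ∈ D' := hconvD' hfx hfy ha hb hab
    have h2 : Ft (f (a • x + b • y)) ≤ Ft (a • f x + b • f y) :=
      hFa hmem1 (hmapsto _ hcomb) h1
    have h3 : Ft (a • f x + b • f y) ≤ a • Ft (f x) + b • Ft (f y) :=
      hFc.2 hfx hfy ha hb hab
    simp only [smul_eq_mul, hFdef] at h2 h3 ⊢
    linarith
  have hFabel : ∀ z ∈ D, F (f z) = F z + 1 := by
    intro z hz
    have h1 : Ft (f (f z)) = Ft (f z) + 1 := hFab (f z) (hmapsto z hz)
    simp only [hFdef]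
    linarith
  refine ⟨F, hFconv, hFabel, ?_⟩
  intro hsm x hx y hy hxy
  have hanti : ∀ p ∈ D, ∀ w ∈ D, p ≤ w → F w ≤ F p := by
    intro p hp w hw hpw
    have h1 : f p ≤ f w := hsm.monotoneOn hp hw hpw
    have h2 := hFa (hmapsto p hp) (hmapsto w hw) h1
    simp only [hFdef]
    linarith
  have hle : F y ≤ F x := hanti x hx y hy hxy.le
  rcases lt_or_eq_of_le hle with h | heq
  · exact h
  exfalso
  have hfyD : f y ∈ D := hmapsD y hy
  have hfxD : f x ∈ D := hmapsD x hx
  have hAbx : F (f x) = F x + 1 := hFabel x hx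
  have hAby : F (f y) = F y + 1 := hFabel y hy
  rcases le_or_gt x (f y) with hxfy | hfyx
  · have h1 : F (f y) ≤ F x := hanti x hx (f y) hfyD hxfy
    have h2 : F y ≤ F (f y) := hanti (f y) hfyD y hy (hf y hy).2.le
    linarith
  · have hfxfy : f x < f y := hsm hx hy hxy
    have hd : 0 < x - f x := by linarith
    set lam := (x - f y) / (x - f x) with hlam
    have h0 : 0 < lam := div_pos (by linarith) hd
    have h1 : lam < 1 := (div_lt_one hd).2 (by linarith)
    have hcomb : lam • f x + (1 - lam) • x = f y := by
      simp only [smul_eq_mul, hlam]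
      field_simp
      ring
    have h2 := hFconv.2 hfxD hx h0.le (by linarith : (0:ℝ) ≤ 1 - lam) (by ring)
    rw [hcomb] at h2
    simp only [smul_eq_mul] at h2
    rw [hAby, hAbx, heq] at h2
    nlinarith [h2, h0, h1]
end

section
/- Let (x_n) be the sequence of rationals with x_0 = 1/2 and x_{n+1} = x_n(1−x_n) for all n ≥ 0. Then for every n ≥ 0 there is an odd positive integer a_n such that x_n = a_n / 2^{2^n}; equivalently, in lowest terms the denominator of x_n is exactly 2^{2^n}. -/
/-- For the logistic recurrence over ℚ with `x 0 = 1/2`, the `n`-th term equals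
`a / 2^(2^n)` with `a` an odd positive integer; equivalently, the denominator of
`x n` in lowest terms is exactly `2^(2^n)`. -/
theorem logistic_half_denominators (x : ℕ → ℚ)
    (h0 : x 0 = 1 / 2)
    (hrec : ∀ n, x (n + 1) = x n * (1 - x n)) :
    ∀ n, (∃ a : ℕ, Odd a ∧ 0 < a ∧ x n = (a : ℚ) / 2 ^ (2 ^ n)) ∧
      (x n).den = 2 ^ (2 ^ n) := by
  have key : ∀ n, ∃ a : ℕ, Odd a ∧ 0 < a ∧ a < 2 ^ (2 ^ n) ∧
      x n = (a : ℚ) / 2 ^ (2 ^ n) := by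
    intro n
    induction n with
    | zero =>
      exact ⟨1, odd_one, one_pos, by norm_num, by rw [h0]; norm_num⟩
    | succ n ih =>
      obtain ⟨a, ha, hpos, hlt, hx⟩ := ih
      refine ⟨a * (2 ^ (2 ^ n) - a), ?_, ?_, ?_, ?_⟩
      · exact ha.mul (Nat.Even.sub_odd hlt.le
          (Nat.even_pow.mpr ⟨even_two, pow_ne_zero n two_ne_zero⟩) ha)
      · exact Nat.mul_pos hpos (Nat.sub_pos_of_lt hlt)
      · calc a * (2 ^ (2 ^ n) - a) < 2 ^ (2 ^ n) * 2 ^ (2 ^ n) := by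
              apply Nat.mul_lt_mul_of_lt_of_le hlt (Nat.sub_le _ _)
              exact Nat.pow_pos two_pos
            _ = 2 ^ (2 ^ (n + 1)) := by rw [← pow_add, pow_succ, mul_two]
      · rw [hrec, hx]
        have hc : ((a * (2 ^ (2 ^ n) - a) : ℕ) : ℚ) = a * (2 ^ (2 ^ n) - a) := by
          push_cast [Nat.cast_sub hlt.le]; ring
        rw [hc]
        have h2 : (2 : ℚ) ^ (2 ^ (n + 1)) = 2 ^ (2 ^ n) * 2 ^ (2 ^ n) := by
          rw [← pow_add, pow_succ, mul_two]
        rw [h2]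
        field_simp
  intro n
  obtain ⟨a, ha, hpos, hlt, hx⟩ := key n
  refine ⟨⟨a, ha, hpos, hx⟩, ?_⟩
  rw [hx]
  have hcop : Nat.Coprime (a : ℤ).natAbs ((2 ^ (2 ^ n) : ℤ)).natAbs := by
    simp only [Int.natAbs_natCast, Int.natAbs_pow]
    exact ((Nat.coprime_two_right.mpr ha)).pow_right _
  have := Rat.den_div_eq_of_coprime (a := (a : ℤ)) (b := 2 ^ (2 ^ n)) (by positivity) hcop
  have h2 : ((a : ℤ) : ℚ) / ((2 ^ (2 ^ n) : ℤ) : ℚ) = (a : ℚ) / 2 ^ (2 ^ n) := by push_cast; ring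
  rw [h2] at this
  exact_mod_cast this
end

section
/- Let (x_n) be the sequence of rationals with x_0 = 1/3 and x_{n+1} = x_n(1−x_n) for all n ≥ 0. Then for every n ≥ 0 there is a positive integer a_n not divisible by 3 such that x_n = a_n / 3^{2^n}; equivalently, in lowest terms the denominator of x_n is exactly 3^{2^n}. -/
/-- For the logistic recurrence over ℚ with `x 0 = 1/3`, the `n`-th term equals
`a / 3^(2^n)` with `a` a positive integer not divisible by 3; equivalently, the
denominator of `x n` in lowest terms is exactly `3^(2^n)`. -/
theorem logistic_third_denominators (x : ℕ → ℚ)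
    (h0 : x 0 = 1 / 3)
    (hrec : ∀ n, x (n + 1) = x n * (1 - x n)) :
    ∀ n, (∃ a : ℕ, ¬ (3 ∣ a) ∧ 0 < a ∧ x n = (a : ℚ) / 3 ^ (2 ^ n)) ∧
      (x n).den = 3 ^ (2 ^ n) := by
  -- strengthen: also a < 3^(2^n)
  have key : ∀ n, ∃ a : ℕ, ¬ (3 ∣ a) ∧ 0 < a ∧ a < 3 ^ (2 ^ n) ∧
      x n = (a : ℚ) / 3 ^ (2 ^ n) := by
    intro n
    induction n with
    | zero => exact ⟨1, by decide, by decide, by decide, by norm_num [h0]⟩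
    | succ n ih =>
      obtain ⟨a, h3, hpos, hlt, hx⟩ := ih
      set D : ℕ := 3 ^ (2 ^ n) with hD
      refine ⟨a * (D - a), ?_, ?_, ?_, ?_⟩
      · intro hdvd
        rcases (Nat.Prime.dvd_mul (by norm_num)).mp hdvd with h | h
        · exact h3 h
        · have h3D : (3 : ℕ) ∣ D := dvd_pow_self 3 (by positivity : (0:ℕ) < 2 ^ n).ne'
          have h3a : (3 : ℕ) ∣ a := by
            have := Nat.dvd_sub h3D h
            rwa [Nat.sub_sub_self hlt.le] at this
          exact h3 h3a
      · exact Nat.mul_pos hpos (Nat.sub_pos_of_lt hlt)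
      · calc a * (D - a) < D * D :=
              Nat.mul_lt_mul_of_lt_of_le hlt (Nat.sub_le _ _) (by positivity)
            _ = 3 ^ (2 ^ (n + 1)) := by
              rw [hD, ← pow_add, ← two_mul, pow_succ, mul_comm]
      · have hDQ : ((3 : ℚ) ^ (2 ^ n)) ≠ 0 := by positivity
        rw [hrec, hx]
        push_cast [Nat.cast_sub hlt.le, hD, pow_succ, pow_mul]
        field_simp
        rw [Nat.cast_sub (by rw [← hD]; exact hlt.le), Nat.cast_pow, Nat.cast_ofNat]
  intro n
  obtain ⟨a, h3, hpos, hlt, hx⟩ := key n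
  refine ⟨⟨a, h3, hpos, hx⟩, ?_⟩
  have hcop : Nat.Coprime a (3 ^ (2 ^ n)) :=
    (((Nat.prime_three.coprime_iff_not_dvd).mpr h3).symm.pow_right _)
  have hden := Rat.den_div_eq_of_coprime (a := (a : ℤ)) (b := (3:ℤ) ^ (2 ^ n))
    (by positivity) (by simp only [Int.natAbs_pow, Int.natAbs_natCast]; exact hcop)
  have hx' : (a : ℚ) / 3 ^ (2 ^ n) = ((a : ℤ) : ℚ) / (((3:ℤ) ^ (2 ^ n) : ℤ) : ℚ) := by
    push_cast; ring
  rw [hx, hx']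
  exact_mod_cast hden
end

section
/- Let (x_n) be the sequence of rationals with x_0 = 1 and x_{n+1} = x_n/(1+x_n+x_n²), and let (y_n) be the sequence of rationals with y_0 = 1/2 and y_{n+1} = y_n(1−y_n). Then y_n = x_n/(1+x_n) for all n, and the numerator of y_n (in lowest terms) equals the numerator of x_n (in lowest terms) for all n ≥ 0. -/
/-- With `x` the B-recurrence sequence (over ℚ, `x 0 = 1`) and `y` the logistic
A-recurrence sequence (`y 0 = 1/2`), one has `y n = x n / (1 + x n)` for all `n`,
and the numerators (in lowest terms) of `y n` and `x n` coincide. -/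
theorem numerators_match_A_B (x y : ℕ → ℚ)
    (hx0 : x 0 = 1)
    (hxrec : ∀ n, x (n + 1) = x n / (1 + x n + (x n) ^ 2))
    (hy0 : y 0 = 1 / 2)
    (hyrec : ∀ n, y (n + 1) = y n * (1 - y n)) :
    ∀ n, y n = x n / (1 + x n) ∧ (y n).num = (x n).num := by
  have hxpos : ∀ n, 0 < x n := by
    intro n
    induction n with
    | zero => rw [hx0]; norm_num
    | succ n ih => rw [hxrec]; positivity
  have key : ∀ n, y n = x n / (1 + x n) := by
    intro n
    induction n with
    | zero => rw [hy0, hx0]; norm_num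
    | succ n ih =>
      have h1 : 0 < x n := hxpos n
      have h2 : (0:ℚ) < 1 + x n := by linarith
      have h3 : (0:ℚ) < 1 + x n + (x n)^2 := by positivity
      rw [hyrec, ih, hxrec]
      field_simp
      ring_nf
  intro n
  refine ⟨key n, ?_⟩
  have h1 := hxpos n
  have hanum : 0 < (x n).num := Rat.num_pos.mpr h1
  set a : ℤ := (x n).num with ha
  set b : ℤ := ((x n).den : ℤ) with hb
  have hbpos : 0 < b := Int.natCast_pos.mpr (x n).pos
  have hxe : x n = (a:ℚ)/(b:ℚ) := ((x n).num_div_den).symm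
  have hab : (0:ℚ) < (b:ℚ) := by exact_mod_cast hbpos
  have hyn : y n = ((a:ℤ):ℚ)/(((a+b:ℤ)):ℚ) := by
    rw [key n, hxe]
    have habq : ((a:ℚ) + b) ≠ 0 := by
      have : (0:ℚ) < (a:ℚ) + b := by
        have : (0:ℚ) < (a:ℚ) := by exact_mod_cast hanum
        linarith
      linarith
    push_cast
    rw [div_div, div_eq_div_iff (by positivity) habq]
    field_simp
    ring
  have hcop : Nat.Coprime a.natAbs (a+b).natAbs := by
    rw [Int.natAbs_add_of_nonneg hanum.le hbpos.le]
    rw [add_comm, Nat.coprime_add_self_right]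
    have := (x n).reduced
    simpa [hb, Int.natAbs_natCast] using this
  rw [hyn]
  exact Rat.num_div_eq_of_coprime (by linarith) hcop
end

section
/- Let (x_n) be the sequence of rationals with x_0 = 1 and x_{n+1} = x_n(1+x_n)/(1+2x_n), and let (y_n) be the sequence of rationals with y_0 = 1/2 and y_{n+1} = y_n/(1+y_n−y_n²). Then y_n = x_n/(1+x_n) for all n, and the numerator of y_n (in lowest terms) equals the numerator of x_n (in lowest terms) for all n ≥ 0. -/
lemma num_div_one_add {r : ℚ} (hr : 0 < r) : (r / (1 + r)).num = r.num := by
  have hp : 0 < r.num := Rat.num_pos.mpr hr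
  have hd : 0 < (r.den : ℤ) := by exact_mod_cast r.pos
  have hsum : 0 < r.num + (r.den : ℤ) := by linarith
  have hmul : r * (r.den : ℚ) = (r.num : ℚ) := Rat.mul_den_eq_num r
  have h1 : r / (1 + r) = (r.num : ℚ) / ((r.num + (r.den : ℤ) : ℤ) : ℚ) := by
    have hsum' : ((r.num + (r.den : ℤ) : ℤ) : ℚ) ≠ 0 := by
      have : (0:ℚ) < ((r.num + (r.den : ℤ) : ℤ) : ℚ) := by exact_mod_cast hsum
      linarith
    rw [div_eq_div_iff (by linarith) hsum']
    push_cast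
    linear_combination hmul
  rw [h1]
  apply Rat.num_div_eq_of_coprime hsum
  have hco : Nat.Coprime r.num.natAbs r.den := r.reduced
  have habs : (r.num + (r.den : ℤ)).natAbs = r.num.natAbs + r.den := by omega
  rw [habs]
  simpa [Nat.coprime_add_self_right] using hco

/-- With `x` the J-recurrence sequence (over ℚ, `x 0 = 1`) and `y` the I-recurrence
sequence (`y 0 = 1/2`), one has `y n = x n / (1 + x n)` for all `n`, and the
numerators (in lowest terms) of `y n` and `x n` coincide. -/
theorem numerators_match_I_J (x y : ℕ → ℚ)
    (hx0 : x 0 = 1)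
    (hxrec : ∀ n, x (n + 1) = x n * (1 + x n) / (1 + 2 * x n))
    (hy0 : y 0 = 1 / 2)
    (hyrec : ∀ n, y (n + 1) = y n / (1 + y n - (y n) ^ 2)) :
    ∀ n, y n = x n / (1 + x n) ∧ (y n).num = (x n).num := by
  have key : ∀ n, 0 < x n ∧ y n = x n / (1 + x n) := by
    intro n
    induction n with
    | zero => constructor <;> simp [hx0, hy0] <;> norm_num
    | succ n ih =>
      obtain ⟨hx, hy⟩ := ih
      have h1 : (0:ℚ) < 1 + x n := by linarith
      have h2 : (0:ℚ) < 1 + 2 * x n := by linarith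
      have hxs : 0 < x (n+1) := by
        rw [hxrec]; exact div_pos (mul_pos hx h1) h2
      refine ⟨hxs, ?_⟩
      have h3 : (0:ℚ) < 1 + 3 * x n + (x n)^2 := by nlinarith
      have h1' : (1 : ℚ) + x n ≠ 0 := ne_of_gt h1
      have h2' : (1 : ℚ) + 2 * x n ≠ 0 := ne_of_gt h2
      have h3' : (1 : ℚ) + 3 * x n + (x n)^2 ≠ 0 := ne_of_gt h3
      rw [hyrec, hxrec, hy]
      rw [div_eq_div_iff]
      · field_simp
        ring
      · have heq : 1 + x n / (1 + x n) - (x n / (1 + x n)) ^ 2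
            = (1 + 3 * x n + (x n)^2) / (1 + x n)^2 := by field_simp; ring
        rw [heq]
        exact ne_of_gt (by positivity)
      · have : 1 + x n * (1 + x n) / (1 + 2 * x n)
            = (1 + 3 * x n + (x n)^2) / (1 + 2 * x n) := by field_simp; ring
        rw [this]
        exact ne_of_gt (by positivity)
  intro n
  obtain ⟨hx, hy⟩ := key n
  refine ⟨hy, ?_⟩
  rw [hy]
  exact num_div_one_add hx
end

section
/- Let (x_n) be a sequence of reals with x_0 > 0 and x_{n+1} = x_n + 1 + 1/x_n for all n. Then the sequence x_n − n − ln(n) converges to a finite limit C as n → ∞. -/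
open Filter

private lemma aux2' (K n s : ℝ) (hK : 0 < K) (hn : 0 < n) (hs : 0 < s) (hss : s * s = n) :
    K * s / (n * (n + K * s)) ≤ (K + 1) / (n * s) := by
  rw [div_le_div_iff₀ (by positivity) (by positivity)]
  nlinarith [mul_pos hn hn, mul_nonneg (mul_nonneg (mul_nonneg hK.le hK.le) hn.le) hs.le,
    mul_nonneg (mul_nonneg hK.le hn.le) hs.le]

/-- For the recurrence `x (n+1) = x n + 1 + 1 / x n` with `x 0 > 0`, the sequence
`x n − n − ln n` converges to a finite limit `C`. -/
theorem plus_recurrence_log_limit (x : ℕ → ℝ)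
    (h0 : 0 < x 0)
    (hrec : ∀ n, x (n + 1) = x n + 1 + 1 / x n) :
    ∃ C : ℝ, Tendsto (fun n : ℕ => x n - (n : ℝ) - Real.log n) atTop (nhds C) := by
  -- lower bound x n ≥ n + x 0
  have hlb : ∀ n : ℕ, (n : ℝ) + x 0 ≤ x n := by
    intro n
    induction n with
    | zero => simp
    | succ n ih =>
      have hxn : 0 < x n := lt_of_lt_of_le (by positivity) ih
      have h1 : 0 < 1 / x n := by positivity
      rw [hrec]
      push_cast
      linarith
  have hpos : ∀ n : ℕ, 0 < x n := fun n => lt_of_lt_of_le (by positivity) (hlb n)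
  have hlbn : ∀ n : ℕ, (n : ℝ) ≤ x n := fun n => by linarith [hlb n]
  -- upper bound
  have hub : ∀ n : ℕ, x n ≤ x 0 + 1 / x 0 + n + 3 * Real.sqrt n := by
    intro n
    induction n with
    | zero =>
      have : 0 < 1 / x 0 := by positivity
      simp
      linarith
    | succ n ih =>
      rcases Nat.eq_zero_or_pos n with hn0 | hn1
      · subst hn0
        rw [hrec]
        have h1 : Real.sqrt ((0:ℕ)+1 : ℕ) = 1 := by norm_num
        push_cast
        norm_num
        nlinarith [Real.sqrt_one]
      · have hn1' : (1:ℝ) ≤ (n:ℝ) := by exact_mod_cast hn1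
        have hnpos : (0:ℝ) < (n:ℝ) := by linarith
        have hxinv : 1 / x n ≤ 1 / (n:ℝ) :=
          one_div_le_one_div_of_le hnpos (hlbn n)
        have ha : Real.sqrt n * Real.sqrt n = (n:ℝ) := Real.mul_self_sqrt (by positivity)
        have hb : Real.sqrt ((n:ℝ)+1) * Real.sqrt ((n:ℝ)+1) = (n:ℝ)+1 :=
          Real.mul_self_sqrt (by positivity)
        have han : 0 ≤ Real.sqrt (n:ℝ) := Real.sqrt_nonneg _
        have hbn : 0 ≤ Real.sqrt ((n:ℝ)+1) := Real.sqrt_nonneg _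
        have ha1 : Real.sqrt (n:ℝ) ≤ (n:ℝ) := by nlinarith
        have hb1 : Real.sqrt ((n:ℝ)+1) ≤ (n:ℝ)+1 := by nlinarith
        have hba : Real.sqrt (n:ℝ) ≤ Real.sqrt ((n:ℝ)+1) := Real.sqrt_le_sqrt (by linarith)
        have key : 1 / (n:ℝ) ≤ 3 * (Real.sqrt ((n:ℝ)+1) - Real.sqrt (n:ℝ)) := by
          rw [div_le_iff₀ hnpos]
          nlinarith [mul_nonneg (sub_nonneg.2 hba)
            (show (0:ℝ) ≤ 3*(n:ℝ) - (Real.sqrt (n:ℝ) + Real.sqrt ((n:ℝ)+1)) by linarith)]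
        rw [hrec]
        push_cast
        linarith
  set K : ℝ := x 0 + 1 / x 0 + 3 with hKdef
  have hK : 0 < K := by positivity
  set g : ℕ → ℝ := fun k => x k - (k:ℝ) - Real.log (k:ℝ) with hgdef
  set d : ℕ → ℝ := fun k => g (k+1) - g k with hddef
  clear_value K g d
  -- bound on d
  have hdbound : ∀ n : ℕ, 1 ≤ n → |d n| ≤ (K+1) / ((n:ℝ) * Real.sqrt n) := by
    intro n hn
    have hn1' : (1:ℝ) ≤ (n:ℝ) := by exact_mod_cast hn
    have hnpos : (0:ℝ) < (n:ℝ) := by linarith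
    set s : ℝ := Real.sqrt (n:ℝ) with hsdef
    clear_value s
    have hs : s * s = (n:ℝ) := by
      rw [hsdef]; exact Real.mul_self_sqrt (by positivity)
    have hspos : 0 < s := by
      rw [hsdef]; exact Real.sqrt_pos.mpr hnpos
    have hs1 : 1 ≤ s := by nlinarith
    have hsle : s ≤ (n:ℝ) := by nlinarith
    have hdn : d n = 1 / x n - (Real.log ((n:ℝ)+1) - Real.log (n:ℝ)) := by
      simp only [hddef, hgdef]
      rw [hrec]
      push_cast
      ring
    -- log bounds
    have hL1 : Real.log ((n:ℝ)+1) - Real.log (n:ℝ) ≤ 1/(n:ℝ) := by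
      have h := Real.log_le_sub_one_of_pos (show (0:ℝ) < ((n:ℝ)+1)/(n:ℝ) by positivity)
      rw [Real.log_div (by positivity) (ne_of_gt hnpos)] at h
      have e : ((n:ℝ)+1)/(n:ℝ) - 1 = 1/(n:ℝ) := by field_simp; ring
      linarith
    have hL2 : 1/((n:ℝ)+1) ≤ Real.log ((n:ℝ)+1) - Real.log (n:ℝ) := by
      have h := Real.log_le_sub_one_of_pos (show (0:ℝ) < (n:ℝ)/((n:ℝ)+1) by positivity)
      rw [Real.log_div (ne_of_gt hnpos) (by positivity)] at h
      have e : (n:ℝ)/((n:ℝ)+1) - 1 = -(1/((n:ℝ)+1)) := by field_simp; ring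
      linarith
    -- 1/x n bounds
    have hx1 : 1 / x n ≤ 1 / (n:ℝ) := one_div_le_one_div_of_le hnpos (hlbn n)
    have hxub : x n ≤ (n:ℝ) + K * s := by
      have h := hub n
      rw [hKdef]
      nlinarith [mul_nonneg (show (0:ℝ) ≤ x 0 + 1/x 0 by positivity)
        (show (0:ℝ) ≤ s - 1 by linarith)]
    have hx2 : 1 / ((n:ℝ) + K * s) ≤ 1 / x n :=
      one_div_le_one_div_of_le (hpos n) hxub
    -- upper bound on d n
    have hup : d n ≤ (K+1) / ((n:ℝ) * s) := by
      have e1 : 1/(n:ℝ) - 1/((n:ℝ)+1) = 1/((n:ℝ)*((n:ℝ)+1)) := by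
        field_simp
        ring
      have e2 : 1/((n:ℝ)*((n:ℝ)+1)) ≤ (K+1)/((n:ℝ)*s) := by
        rw [div_le_div_iff₀ (by positivity) (mul_pos hnpos hspos)]
        nlinarith [mul_le_mul_of_nonneg_left hsle hnpos.le,
          mul_nonneg hK.le (mul_nonneg hnpos.le (show (0:ℝ) ≤ (n:ℝ)+1 by linarith))]
      rw [hdn]
      linarith
    -- lower bound on d n
    have hlow : -((K+1) / ((n:ℝ) * s)) ≤ d n := by
      have e1 : 1/(n:ℝ) - 1/((n:ℝ)+K*s) = K*s/((n:ℝ)*((n:ℝ)+K*s)) := by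
        field_simp
        ring
      have e2 : K*s/((n:ℝ)*((n:ℝ)+K*s)) ≤ (K+1)/((n:ℝ)*s) :=
        aux2' K (n:ℝ) s hK hnpos hspos hs
      rw [hdn]
      linarith
    exact abs_le.mpr ⟨hlow, hup⟩
  -- summability
  have hg32 : Summable (fun n : ℕ => (K+1) * (1 / (n:ℝ) ^ (3/2 : ℝ))) :=
    (Real.summable_one_div_nat_rpow.mpr (by norm_num)).mul_left _
  have heq : ∀ n : ℕ, (K+1) / ((n:ℝ) * Real.sqrt (n:ℝ)) = (K+1) * (1 / (n:ℝ) ^ (3/2:ℝ)) := by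
    intro n
    rcases Nat.eq_zero_or_pos n with h | h
    · subst h
      simp
    · have hnp : (0:ℝ) < (n:ℝ) := by exact_mod_cast h
      rw [show (3/2:ℝ) = 1 + 1/2 by norm_num, Real.rpow_add hnp, Real.rpow_one,
        ← Real.sqrt_eq_rpow, mul_one_div]
  have hgs : Summable (fun n : ℕ => (K+1) / ((n:ℝ) * Real.sqrt (n:ℝ))) :=
    hg32.congr fun n => (heq n).symm
  have hds : Summable d := by
    rw [← summable_nat_add_iff 1]
    apply Summable.of_norm_bounded ((summable_nat_add_iff 1).mpr hgs)
    intro n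
    have := hdbound (n+1) (by omega)
    simpa [Real.norm_eq_abs] using this
  obtain ⟨S, hS⟩ := hds
  refine ⟨g 0 + S, ?_⟩
  have htend : Tendsto (fun n : ℕ => g 0 + ∑ i ∈ Finset.range n, d i) atTop (nhds (g 0 + S)) :=
    tendsto_const_nhds.add hS.tendsto_sum_nat
  refine htend.congr fun n => ?_
  simp only [hddef]
  rw [Finset.sum_range_sub (f := g)]
  simp [hgdef]
end

section
/- Let (x_n) be a sequence of reals with x_0 > 1 and x_{n+1} = x_n + 1 − 1/x_n for all n. Then x_n > 1 for all n and the sequence x_n − n + ln(n) converges to a finite limit C as n → ∞. -/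
open Filter

set_option maxHeartbeats 1600000 in
/-- For the recurrence `x (n+1) = x n + 1 − 1 / x n` with `x 0 > 1`, all iterates stay
greater than `1` and the sequence `x n − n + ln n` converges to a finite limit `C`. -/
theorem minus_recurrence_log_limit (x : ℕ → ℝ)
    (h0 : 1 < x 0)
    (hrec : ∀ n, x (n + 1) = x n + 1 - 1 / x n) :
    (∀ n, 1 < x n) ∧
      ∃ C : ℝ, Tendsto (fun n : ℕ => x n - (n : ℝ) + Real.log n) atTop (nhds C) := by
  have hx0 : (0:ℝ) < x 0 := by linarith
  set c : ℝ := 1 - 1 / x 0 with hc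
  have hcpos : 0 < c := by
    have h : 1 / x 0 < 1 := by rw [div_lt_one hx0]; linarith
    simp only [hc]; linarith
  have hc1 : c ≤ 1 := by
    have h : 0 < 1 / x 0 := by positivity
    simp only [hc]; linarith
  -- lower bound: x n ≥ x 0 + c * n
  have hlow : ∀ n : ℕ, x 0 + c * n ≤ x n := by
    intro n
    induction n with
    | zero => simp
    | succ n ih =>
      have hn0 : (0:ℝ) ≤ (n:ℝ) := Nat.cast_nonneg n
      have hxn : x 0 ≤ x n := by nlinarith
      have hxnpos : (0:ℝ) < x n := lt_of_lt_of_le hx0 hxn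
      have hdiv : 1 / x n ≤ 1 / x 0 := one_div_le_one_div_of_le hx0 hxn
      rw [hrec n]
      push_cast
      simp only [hc] at *
      linarith
  have h1 : ∀ n, 1 < x n := by
    intro n
    have := hlow n
    have hn0 : (0:ℝ) ≤ (n:ℝ) := Nat.cast_nonneg n
    nlinarith
  have hxpos : ∀ n, (0:ℝ) < x n := fun n => lt_trans one_pos (h1 n)
  refine ⟨h1, ?_⟩
  -- partial sums of 1/x
  set S : ℕ → ℝ := fun n => ∑ k ∈ Finset.range n, 1 / x k with hS
  have hSform : ∀ n : ℕ, x n = x 0 + n - S n := by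
    intro n
    induction n with
    | zero => simp [hS]
    | succ n ih =>
      rw [hrec n]
      simp only [hS, Finset.sum_range_succ]
      push_cast
      linarith [ih]
  -- S n ≤ (2/c) * sqrt n
  have hSsqrt : ∀ n : ℕ, S n ≤ (2 / c) * Real.sqrt n := by
    intro n
    have hstep : ∀ k : ℕ, 1 / x k ≤ (2 / c) * (Real.sqrt (k + 1) - Real.sqrt k) := by
      intro k
      have hk0 : (0:ℝ) ≤ (k:ℝ) := Nat.cast_nonneg k
      have hs1 : (0:ℝ) < Real.sqrt (k + 1) := Real.sqrt_pos.mpr (by linarith)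
      have hs0 : (0:ℝ) ≤ Real.sqrt k := Real.sqrt_nonneg _
      have hsq1 : Real.sqrt ((k:ℝ) + 1) ^ 2 = (k:ℝ) + 1 := Real.sq_sqrt (by linarith)
      have hsq0 : Real.sqrt (k:ℝ) ^ 2 = (k:ℝ) := Real.sq_sqrt hk0
      have hprod : (Real.sqrt (k + 1) - Real.sqrt k) * (Real.sqrt (k + 1) + Real.sqrt k) = 1 := by
        nlinarith
      have hsle : Real.sqrt ((k:ℝ) + 1) ≤ (k:ℝ) + 1 := by
        nlinarith [Real.sq_sqrt (show (0:ℝ) ≤ (k:ℝ)+1 by linarith), Real.sqrt_nonneg ((k:ℝ)+1)]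
      have hmono : Real.sqrt (k:ℝ) ≤ Real.sqrt ((k:ℝ) + 1) := Real.sqrt_le_sqrt (by linarith)
      -- c * (s1 + s0) ≤ 2 * x k
      have hxk : x 0 + c * k ≤ x k := hlow k
      have hkey : c * (Real.sqrt (k + 1) + Real.sqrt k) ≤ 2 * x k := by
        have h2 : c * (Real.sqrt (k + 1) + Real.sqrt k) ≤ 2 * c * ((k:ℝ) + 1) := by
          nlinarith
        have h3 : c * ((k:ℝ) + 1) ≤ x 0 + c * k := by nlinarith
        nlinarith
      -- 1 / x k ≤ 2 / (c * (s1 + s0)) = (2/c) * (s1 - s0)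
      have hpos : (0:ℝ) < c * (Real.sqrt (k + 1) + Real.sqrt k) := by positivity
      have h4 : 1 / x k ≤ 2 / (c * (Real.sqrt (k + 1) + Real.sqrt k)) := by
        rw [div_le_div_iff₀ (hxpos k) hpos]
        linarith
      have h5 : 2 / (c * (Real.sqrt (k + 1) + Real.sqrt k))
          = (2 / c) * (Real.sqrt (k + 1) - Real.sqrt k) := by
        rw [div_eq_iff (ne_of_gt hpos)]
        field_simp
        nlinarith
      linarith [h4, h5.ge, h5.le]
    calc S n ≤ ∑ k ∈ Finset.range n, (2 / c) * (Real.sqrt (k + 1) - Real.sqrt k) := by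
          apply Finset.sum_le_sum
          intro k _
          exact hstep k
      _ = (2 / c) * Real.sqrt n := by
          rw [← Finset.mul_sum]
          congr 1
          have := Finset.sum_range_sub (fun k : ℕ => Real.sqrt k) n
          push_cast at this ⊢
          rw [this]
          simp
  -- the difference sequence
  set d : ℕ → ℝ := fun n => Real.log (n + 1) - Real.log n - 1 / x n with hd
  -- summability of d
  have hsummable : Summable d := by
    apply Summable.of_norm_bounded_eventually
      (g := fun n : ℕ => (1 + (x 0 + 1) / c) * (1 / (n:ℝ) ^ 2) + (2 / c ^ 2) * (Real.sqrt n / (n:ℝ) ^ 2))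
    · apply Summable.add
      · exact (Real.summable_one_div_nat_pow.mpr one_lt_two).mul_left _
      · apply Summable.mul_left
        have hs32 : Summable (fun n : ℕ => ((n:ℝ) ^ ((3:ℝ)/2))⁻¹) :=
          Real.summable_nat_rpow_inv.mpr (by norm_num)
        refine Summable.of_nonneg_of_le (fun n => by positivity) (fun n => ?_) hs32
        rcases Nat.eq_zero_or_pos n with h | h
        · simp [h]
        · have hn1 : (1:ℝ) ≤ (n:ℝ) := by exact_mod_cast h
          have hn0 : (0:ℝ) < (n:ℝ) := by linarith
          have hs : Real.sqrt n * Real.sqrt n = (n:ℝ) := Real.mul_self_sqrt (le_of_lt hn0)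
          have hsp : (0:ℝ) < Real.sqrt n := Real.sqrt_pos.mpr hn0
          have hrw : ((n:ℝ) ^ ((3:ℝ)/2)) = (n:ℝ) * Real.sqrt n := by
            rw [show ((3:ℝ)/2) = 1 + 1/2 by norm_num, Real.rpow_add hn0, Real.rpow_one,
              ← Real.sqrt_eq_rpow]
          rw [hrw, inv_eq_one_div, div_le_div_iff₀ (by positivity) (by positivity)]
          nlinarith
    · -- eventual bound on ‖d n‖
      rw [Nat.cofinite_eq_atTop, eventually_atTop]
      refine ⟨1, fun n hn => ?_⟩
      have hn1 : (1:ℝ) ≤ (n:ℝ) := by exact_mod_cast hn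
      have hn0 : (0:ℝ) < (n:ℝ) := by linarith
      -- log piece
      have hlog_ub : Real.log ((n:ℝ) + 1) - Real.log n ≤ 1 / n := by
        have := Real.log_le_sub_one_of_pos (show (0:ℝ) < ((n:ℝ)+1)/n by positivity)
        rw [Real.log_div (by positivity) (by positivity)] at this
        have h2 : ((n:ℝ) + 1) / n - 1 = 1 / n := by field_simp; ring
        linarith
      have hlog_lb : 1 / ((n:ℝ) + 1) ≤ Real.log ((n:ℝ) + 1) - Real.log n := by
        have := Real.log_le_sub_one_of_pos (show (0:ℝ) < (n:ℝ)/((n:ℝ)+1) by positivity)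
        rw [Real.log_div (by positivity) (by positivity)] at this
        have h2 : (n:ℝ) / ((n:ℝ) + 1) - 1 = -(1 / ((n:ℝ)+1)) := by field_simp; ring
        linarith
      -- |log(n+1) - log n - 1/(n+1)| ≤ 1/n^2
      have hn2 : (0:ℝ) < (n:ℝ) ^ 2 := pow_pos hn0 2
      have hpiece1 : |Real.log ((n:ℝ) + 1) - Real.log n - 1 / ((n:ℝ) + 1)| ≤ 1 / (n:ℝ) ^ 2 := by
        have hq : (0:ℝ) < 1 / (n:ℝ) ^ 2 := by positivity
        rw [abs_le]
        constructor
        · linarith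
        · have hsub : 1 / (n:ℝ) - 1 / ((n:ℝ)+1) = 1 / ((n:ℝ) * ((n:ℝ)+1)) := by
            rw [div_sub_div _ _ (ne_of_gt hn0) (by linarith), one_mul, mul_one]
            congr 1
            ring
          have hle : 1 / ((n:ℝ) * ((n:ℝ)+1)) ≤ 1 / (n:ℝ) ^ 2 := by
            apply one_div_le_one_div_of_le hn2
            nlinarith
          linarith
      -- |1/(n+1) - 1/x n| ≤ (x0 + 1 + (2/c)√n) / (c n^2)
      have hSnn : 0 ≤ S n :=
        Finset.sum_nonneg (fun k _ => le_of_lt (one_div_pos.mpr (hxpos k)))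
      have hxn_eq : x n - ((n:ℝ) + 1) = x 0 - 1 - S n := by
        rw [hSform n]; ring
      have hsqnn : (0:ℝ) ≤ (2 / c) * Real.sqrt n := by positivity
      have hnum : |x n - ((n:ℝ) + 1)| ≤ x 0 + 1 + (2 / c) * Real.sqrt n := by
        rw [hxn_eq, abs_le]
        constructor
        · have := hSsqrt n
          linarith
        · linarith
      have hden : c * (n:ℝ) ^ 2 ≤ x n * ((n:ℝ) + 1) := by
        have hxk : x 0 + c * n ≤ x n := hlow n
        have : c * (n:ℝ) ≤ x n := by linarith
        nlinarith [hxpos n]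
      have hpiece2 : |1 / ((n:ℝ) + 1) - 1 / x n|
          ≤ (x 0 + 1 + (2 / c) * Real.sqrt n) / (c * (n:ℝ) ^ 2) := by
        have heq : 1 / ((n:ℝ) + 1) - 1 / x n = (x n - ((n:ℝ)+1)) / (x n * ((n:ℝ)+1)) := by
          rw [div_sub_div _ _ (by linarith : ((n:ℝ)+1) ≠ 0) (hxpos n).ne', one_mul, mul_one,
            mul_comm ((n:ℝ)+1) (x n)]
        rw [heq, abs_div,
          abs_of_pos (mul_pos (hxpos n) (by linarith : (0:ℝ) < (n:ℝ)+1))]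
        exact div_le_div₀ (by linarith) hnum (mul_pos hcpos hn2) hden
      -- combine
      have hd_eq : d n = (Real.log ((n:ℝ) + 1) - Real.log n - 1 / ((n:ℝ)+1))
          + (1 / ((n:ℝ)+1) - 1 / x n) := by
        simp only [hd]; ring
      rw [Real.norm_eq_abs, hd_eq]
      have habs := abs_add_le (Real.log ((n:ℝ) + 1) - Real.log n - 1 / ((n:ℝ)+1))
        (1 / ((n:ℝ)+1) - 1 / x n)
      have hsplit : (x 0 + 1 + (2 / c) * Real.sqrt n) / (c * (n:ℝ) ^ 2)
          = ((x 0 + 1) / c) * (1 / (n:ℝ) ^ 2) + (2 / c ^ 2) * (Real.sqrt n / (n:ℝ) ^ 2) := by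
        field_simp
      rw [hsplit] at hpiece2
      have h1n : |Real.log ((n:ℝ) + 1) - Real.log n - 1 / ((n:ℝ)+1)| ≤ 1 * (1 / (n:ℝ)^2) := by
        rw [one_mul]; exact hpiece1
      calc |Real.log ((n:ℝ) + 1) - Real.log n - 1 / ((n:ℝ)+1) + (1 / ((n:ℝ)+1) - 1 / x n)|
          ≤ _ + _ := habs
        _ ≤ 1 * (1 / (n:ℝ)^2) + (((x 0 + 1) / c) * (1 / (n:ℝ) ^ 2) + (2 / c ^ 2) * (Real.sqrt n / (n:ℝ) ^ 2)) := by
            exact add_le_add h1n hpiece2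
        _ = (1 + (x 0 + 1) / c) * (1 / (n:ℝ) ^ 2) + (2 / c ^ 2) * (Real.sqrt n / (n:ℝ) ^ 2) := by ring
  -- telescoping and limit
  refine ⟨x 0 + ∑' n, d n, ?_⟩
  have htel : ∀ n : ℕ, x n - (n:ℝ) + Real.log n = x 0 + ∑ k ∈ Finset.range n, d k := by
    intro n
    have := Finset.sum_range_sub (fun k : ℕ => x k - (k:ℝ) + Real.log k) n
    have heq : ∀ k : ℕ, (x (k+1) - ((k:ℝ)+1) + Real.log ((k:ℝ)+1)) - (x k - (k:ℝ) + Real.log k) = d k := by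
      intro k
      rw [hrec k]
      simp only [hd]
      ring
    simp only [Nat.cast_add, Nat.cast_one] at this
    rw [Finset.sum_congr rfl (fun k _ => heq k)] at this
    simp only [Nat.cast_zero, Real.log_zero] at this
    linarith [this]
  have : Tendsto (fun n : ℕ => x 0 + ∑ k ∈ Finset.range n, d k) atTop (nhds (x 0 + ∑' n, d n)) :=
    Tendsto.const_add _ hsummable.hasSum.tendsto_sum_nat
  exact this.congr (fun n => (htel n).symm)
end
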